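/- For γ ≥ 1 and τ_s > 1, define f_s(τ_s) := 2h(1 + (γ-1)h)(1 + (γ+1)h) + (τ_s + 1)((τ_s - 1)τ_s^(γ-1) - 2h)h', with h, h' evaluated at τ_s. Then f_s(τ_s) = (2(γ+1)τ_s h² + τ_s(τ_s² - 1)h' - 2h) h', and f_s(τ_s) > 0 for all τ_s > 1. -/

import Mathlib

/-- Polytropic enthalpy: `h(τ) = (τ^(γ-1) - 1)/(γ-1)` for `γ > 1`, `log τ` for `γ = 1`. -/
noncomputable def enthalpy (γ τ : ℝ) : ℝ :=
  if γ = 1 then Real.log τ else (τ ^ (γ - 1) - 1) / (γ - 1)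

/-- `f_s(τ) = 2h(1 + (γ-1)h)(1 + (γ+1)h) + (τ+1)((τ-1)τ^(γ-1) - 2h)h'`,
with `h` and `h' = τ^(γ-2)` evaluated at `τ`. -/
noncomputable def fS (γ τ : ℝ) : ℝ :=
  2 * enthalpy γ τ * (1 + (γ - 1) * enthalpy γ τ) * (1 + (γ + 1) * enthalpy γ τ) +
    (τ + 1) * ((τ - 1) * τ ^ (γ - 1) - 2 * enthalpy γ τ) * τ ^ (γ - 2)

/-! Writing `h' = τ^(γ-2)`, the identity `τ h' = τ^(γ-1) = 1 + (γ-1) h` turns `f_s` into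
`(2(γ+1)τh² + τ(τ²-1)h' - 2h) h'`. The last two terms of the bracket have a positive sum because
`g(τ) = (τ²-1)τ^(γ-1) - 2h(τ)` vanishes at `τ = 1` and has derivative `(γ+1)(τ²-1)τ^(γ-2) > 0`. -/

open Set

lemma enthalpy_one (γ : ℝ) : enthalpy γ 1 = 0 := by
  unfold enthalpy
  split_ifs <;> simp

lemma hasDerivAt_enthalpy (γ : ℝ) {τ : ℝ} (hτ : 0 < τ) :
    HasDerivAt (enthalpy γ) (τ ^ (γ - 2)) τ := by
  by_cases hγ : γ = 1
  · subst hγ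
    have hlog : enthalpy 1 = Real.log := funext fun t => by simp [enthalpy]
    rw [hlog, show (1 : ℝ) - 2 = -1 by norm_num, Real.rpow_neg_one]
    exact Real.hasDerivAt_log hτ.ne'
  · have hpow : enthalpy γ = fun t => (t ^ (γ - 1) - 1) / (γ - 1) :=
      funext fun t => by simp [enthalpy, hγ]
    rw [hpow]
    refine (((Real.hasDerivAt_rpow_const (p := γ - 1) (Or.inl hτ.ne')).sub_const 1).div_const
      (γ - 1)).congr_deriv ?_
    rw [show γ - 1 - 1 = γ - 2 by ring]
    field_simp [sub_ne_zero.mpr hγ]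

lemma rpow_sub_one_eq_one_add_mul_enthalpy (γ τ : ℝ) :
    τ ^ (γ - 1) = 1 + (γ - 1) * enthalpy γ τ := by
  by_cases hγ : γ = 1
  · simp [hγ]
  · simp only [enthalpy, hγ, if_false]
    field_simp [sub_ne_zero.mpr hγ]
    ring

lemma mul_rpow_sub_two {τ : ℝ} (hτ : 0 < τ) (γ : ℝ) : τ * τ ^ (γ - 2) = τ ^ (γ - 1) := by
  rw [show γ - 1 = 1 + (γ - 2) by ring, Real.rpow_add hτ, Real.rpow_one]

lemma hasDerivAt_sq_sub_one_mul_rpow_sub_one_sub_two_mul_enthalpy (γ : ℝ) {x : ℝ} (hx : 0 < x) :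
    HasDerivAt (fun x => (x ^ 2 - 1) * x ^ (γ - 1) - 2 * enthalpy γ x)
      ((γ + 1) * (x ^ 2 - 1) * x ^ (γ - 2)) x := by
  have hsq : HasDerivAt (fun x : ℝ => x ^ 2 - 1) (2 * x) x := by
    simpa using (hasDerivAt_pow 2 x).sub_const 1
  refine ((hsq.mul (Real.hasDerivAt_rpow_const (p := γ - 1) (Or.inl hx.ne'))).sub
    ((hasDerivAt_enthalpy γ hx).const_mul 2)).congr_deriv ?_
  rw [show γ - 1 - 1 = γ - 2 by ring]
  linear_combination (-2 * x) * mul_rpow_sub_two hx γ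

lemma two_mul_enthalpy_lt (γ : ℝ) (hγ : -1 < γ) {τ : ℝ} (hτ : 1 < τ) :
    2 * enthalpy γ τ < (τ ^ 2 - 1) * τ ^ (γ - 1) := by
  have hderiv := fun x (hx : 0 < x) =>
    hasDerivAt_sq_sub_one_mul_rpow_sub_one_sub_two_mul_enthalpy γ hx
  have hmono : StrictMonoOn (fun x => (x ^ 2 - 1) * x ^ (γ - 1) - 2 * enthalpy γ x) (Ici 1) := by
    refine strictMonoOn_of_deriv_pos (convex_Ici 1)
      (fun x hx => (hderiv x (by linarith [mem_Ici.mp hx])).continuousAt.continuousWithinAt)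
      fun x hx => ?_
    rw [interior_Ici, mem_Ioi] at hx
    have hx0 : 0 < x := by linarith
    rw [(hderiv x hx0).deriv]
    have : 0 < x ^ 2 - 1 := by nlinarith
    have : 0 < γ + 1 := by linarith
    positivity
  have := hmono self_mem_Ici (mem_Ici.mpr hτ.le) hτ
  simp only [enthalpy_one] at this
  linarith

lemma fS_eq (γ : ℝ) {τ : ℝ} (hτ : 0 < τ) :
    fS γ τ =
      (2 * (γ + 1) * τ * (enthalpy γ τ) ^ 2 + τ * (τ ^ 2 - 1) * τ ^ (γ - 2) -
          2 * enthalpy γ τ) * τ ^ (γ - 2) := by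
  have hpow := rpow_sub_one_eq_one_add_mul_enthalpy γ τ
  have hmul := mul_rpow_sub_two hτ γ
  unfold fS
  linear_combination (-(2 * enthalpy γ τ * (1 + (γ + 1) * enthalpy γ τ))) * hpow +
    (-(2 * enthalpy γ τ * (1 + (γ + 1) * enthalpy γ τ)) - (τ ^ 2 - 1) * τ ^ (γ - 2)) * hmul

lemma fS_pos (γ : ℝ) (hγ : -1 < γ) {τ : ℝ} (hτ : 1 < τ) : 0 < fS γ τ := by
  have hτ0 : 0 < τ := by linarith
  rw [fS_eq γ hτ0]
  have hquad : 0 ≤ 2 * (γ + 1) * τ * (enthalpy γ τ) ^ 2 := by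
    have : 0 < γ + 1 := by linarith
    positivity
  have hkey : 2 * enthalpy γ τ < τ * (τ ^ 2 - 1) * τ ^ (γ - 2) := by
    rw [mul_right_comm, mul_rpow_sub_two hτ0, mul_comm (τ ^ (γ - 1))]
    exact two_mul_enthalpy_lt γ hγ hτ
  exact mul_pos (by linarith) (Real.rpow_pos_of_pos hτ0 _)

/-- For `γ ≥ 1` and `τ > 1`:
`f_s(τ) = (2(γ+1)τh² + τ(τ²-1)h' - 2h)h'`, and `f_s(τ) > 0`. -/
theorem fS_eq_and_pos (γ : ℝ) (hγ : 1 ≤ γ) :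
    ∀ τ : ℝ, 1 < τ →
      fS γ τ =
        (2 * (γ + 1) * τ * (enthalpy γ τ) ^ 2 + τ * (τ ^ 2 - 1) * τ ^ (γ - 2) -
            2 * enthalpy γ τ) * τ ^ (γ - 2) ∧
      0 < fS γ τ :=
  fun _ hτ => ⟨fS_eq γ (by linarith), fS_pos γ (by linarith) hτ⟩
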